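/- Every word-representable graph on n ≥ 3 vertices is 2(n−2)-word-representable. -/

import Mathlib

variable {V : Type*}

/-- Letters `x` and `y` alternate in the word `W`: the subword induced by the two
letters has no two equal consecutive letters. -/
def Alternate [DecidableEq V] (W : List V) (x y : V) : Prop :=
  (W.filter (fun z => z = x ∨ z = y)).Chain' (· ≠ ·)

/-- A word is `k`-uniform if every letter of the alphabet occurs exactly `k` times. -/
def Uniform [DecidableEq V] (W : List V) (k : ℕ) : Prop :=
  ∀ x : V, W.count x = k

/-- A word `W` represents the graph `G`: every vertex occurs in `W` and two distinct
vertices are adjacent iff they alternate in `W`. -/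
def Represents [DecidableEq V] (W : List V) (G : SimpleGraph V) : Prop :=
  (∀ x : V, x ∈ W) ∧ ∀ x y : V, x ≠ y → (G.Adj x y ↔ Alternate W x y)

def WordRepresentable [DecidableEq V] (G : SimpleGraph V) : Prop :=
  ∃ W : List V, Represents W G

def KWordRepresentable [DecidableEq V] (G : SimpleGraph V) (k : ℕ) : Prop :=
  ∃ W : List V, Uniform W k ∧ Represents W G

/-- A digraph (relation) is acyclic if it has no directed cycle. -/
def Acyclic (E : V → V → Prop) : Prop :=
  ∀ x : V, ¬ Relation.TransGen E x x

/-- A digraph is semi-transitive if it is acyclic and for every directed path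
`v 0 → v 1 → ⋯ → v k` such that the arc `v 0 → v k` is present, all arcs
`v i → v j` for `i < j` are present. -/
def SemiTransitive (E : V → V → Prop) : Prop :=
  Acyclic E ∧ ∀ (k : ℕ) (v : Fin (k + 1) → V),
    (∀ i : Fin k, E (v i.castSucc) (v i.succ)) →
    E (v 0) (v (Fin.last k)) →
    ∀ i j : Fin (k + 1), i < j → E (v i) (v j)

/-- `E` is an orientation of the graph `G`. -/
def IsOrientation (G : SimpleGraph V) (E : V → V → Prop) : Prop :=
  ∀ x y : V, G.Adj x y ↔ (E x y ∨ E y x)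

/-- The word `W` covers the set `A` of non-edges of the digraph `E` orienting `G`:
`W` is `k`-uniform for some `k`; its initial permutation is a topological sort of `E`
(first occurrences respect reachability); `G` is a subgraph of the graph represented
by `W`; and every pair in `A` is a non-edge of the graph represented by `W`. -/
def Covers [DecidableEq V] (W : List V) (G : SimpleGraph V) (E : V → V → Prop)
    (A : Set (V × V)) : Prop :=
  (∃ k : ℕ, Uniform W k) ∧
  (∀ u v : V, Relation.TransGen E u v → W.idxOf u < W.idxOf v) ∧
  (∀ x y : V, G.Adj x y → Alternate W x y) ∧
  ∀ p ∈ A, ¬ Alternate W p.1 p.2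

/-- `G` is representable by a concatenation of `k` permutations of its vertex set. -/
def PermutationallyRepresentable [DecidableEq V] (G : SimpleGraph V) (k : ℕ) : Prop :=
  ∃ Ps : List (List V), Ps.length = k ∧
    (∀ P ∈ Ps, P.Nodup ∧ ∀ x : V, x ∈ P) ∧
    Represents Ps.flatten G

/-!
Orient each edge `xy` of the graph represented by a word `W` from `x` to `y` when `x` leads:
every prefix of `W` has as many `x`'s as `y`'s or one more. Prefix counts can only drop along a
directed path, so the orientation is acyclic, and it is shortcut-free: if `x → y` is an arc and
`w` lies on a path from `x` to `y`, the counts of `w` are squeezed between those of `y` and `x`,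
so `w` alternates with both.

Fix a linear extension `t` of this orientation. For a vertex `c`, cut the vertices into ten
segments according to their position relative to `c` and list each segment in `t`-order; every
vertex lies in exactly two segments, so the block is 2-uniform. In every block an arc `x → y`
reads `x y x y`, while in the block of `c` the vertex `c` and any non-neighbour `z` read `c c` or
`z z`. Concatenating the blocks of all vertices except the two ends of some edge gives a
`2(n - 2)`-uniform word representing the graph, since every non-edge has an end outside that
edge. An edgeless graph is represented by `n - 2` copies of `P ++ P.reverse` for a permutation `P`.
-/

open Relation

section Alternation

variable [DecidableEq V]

def Leads (W : List V) (x y : V) : Prop :=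
  ∀ u, u <+: W → u.count y ≤ u.count x ∧ u.count x ≤ u.count y + 1

theorem alternate_iff_isChain {W : List V} {x y : V} :
    Alternate W x y ↔ (W.filter (fun z => z = x ∨ z = y)).IsChain (· ≠ ·) := Iff.rfl

theorem filter_eq_or_eq_comm (W : List V) (x y : V) :
    W.filter (fun z => z = x ∨ z = y) = W.filter (fun z => z = y ∨ z = x) := by
  simp only [or_comm]

theorem alternate_comm {W : List V} {x y : V} : Alternate W x y ↔ Alternate W y x := by
  rw [alternate_iff_isChain, alternate_iff_isChain, filter_eq_or_eq_comm]

theorem leads_cons_iff {a : V} {W : List V} {x y : V} :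
    Leads (a :: W) x y ↔ ∀ u, u <+: W → (a :: u).count y ≤ (a :: u).count x ∧
      (a :: u).count x ≤ (a :: u).count y + 1 := by
  simp only [Leads, List.prefix_cons_iff]
  constructor
  · exact fun h u hu => h _ (Or.inr ⟨u, rfl, hu⟩)
  · rintro h _ (rfl | ⟨u, rfl, hu⟩)
    · simp
    · exact h u hu

theorem leads_iff {x y : V} (hxy : x ≠ y) (W : List V) :
    Leads W x y ↔ (W.filter (fun z => z = x ∨ z = y)).IsChain (· ≠ ·) ∧
      (W.filter (fun z => z = x ∨ z = y)).head? ≠ some y := by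
  induction W generalizing x y with
  | nil => simp [Leads]
  | cons a W ih =>
    rw [leads_cons_iff]
    by_cases hax : a = x
    · subst hax
      have hshift : (∀ u, u <+: W → (a :: u).count y ≤ (a :: u).count a ∧
          (a :: u).count a ≤ (a :: u).count y + 1) ↔ Leads W y a :=
        forall₂_congr fun u _ => by
          rw [List.count_cons_self, List.count_cons_of_ne hxy]; omega
      rw [hshift, ih hxy.symm, List.filter_cons_of_pos (by simp), List.isChain_cons,
        filter_eq_or_eq_comm W a y, List.head?_cons]
      constructor
      · rintro ⟨hc, hh⟩
        exact ⟨⟨fun b hb hab => hh (hab ▸ hb), hc⟩, by simpa using hxy⟩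
      · rintro ⟨⟨hh, hc⟩, -⟩
        exact ⟨hc, fun h => hh a h rfl⟩
    by_cases hay : a = y
    · subst hay
      rw [List.filter_cons_of_pos (by simp), List.head?_cons]
      simp only [ne_eq, not_true_eq_false, and_false, iff_false]
      exact fun h => by simpa [hax] using h [] List.nil_prefix
    · have hshift : (∀ u, u <+: W → (a :: u).count y ≤ (a :: u).count x ∧
          (a :: u).count x ≤ (a :: u).count y + 1) ↔ Leads W x y :=
        forall₂_congr fun u _ => by
          rw [List.count_cons_of_ne hax, List.count_cons_of_ne hay]
      rw [hshift, List.filter_cons_of_neg (by simp [hax, hay]), ih hxy]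

theorem alternate_iff_leads {W : List V} {x y : V} (hxy : x ≠ y) :
    Alternate W x y ↔ Leads W x y ∨ Leads W y x := by
  rw [leads_iff hxy, leads_iff hxy.symm, filter_eq_or_eq_comm W y x, alternate_iff_isChain,
    ← and_or_left, iff_self_and]
  intro _
  by_contra! h
  exact hxy (Option.some_injective _ (h.2.symm.trans h.1))

theorem not_leads_and_leads {W : List V} {x y : V} (hxy : x ≠ y) (hx : x ∈ W) :
    ¬ (Leads W x y ∧ Leads W y x) := by
  rw [leads_iff hxy, leads_iff hxy.symm, filter_eq_or_eq_comm W y x]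
  obtain ⟨h, hh⟩ : ∃ h, (W.filter (fun z => z = x ∨ z = y)).head? = some h :=
    Option.isSome_iff_exists.mp (by simpa [List.isSome_head?] using ⟨x, hx, by simp⟩)
  have : h = x ∨ h = y := by simpa using (List.mem_filter.mp (List.mem_of_mem_head? hh)).2
  rw [hh]
  rcases this with rfl | rfl <;> simp

theorem uniform_flatten {Bs : List (List V)} {k : ℕ} (h : ∀ B ∈ Bs, Uniform B k) :
    Uniform Bs.flatten (k * Bs.length) := by
  intro z
  rw [List.count_flatten, List.map_congr_left fun B hB => h B hB z, List.map_const',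
    List.sum_replicate, smul_eq_mul, mul_comm]

theorem not_alternate_flatten {Bs : List (List V)} {B : List V} {x y : V} (hB : B ∈ Bs)
    (h : ¬ Alternate B x y) : ¬ Alternate Bs.flatten x y := by
  rw [alternate_iff_isChain, List.filter_flatten] at *
  exact fun hc => h (hc.infix (List.infix_of_mem_flatten (List.mem_map_of_mem hB)))

theorem alternate_flatten {Bs : List (List V)} {x y : V} (hxy : x ≠ y)
    (h : ∀ B ∈ Bs, B.filter (fun z => z = x ∨ z = y) = [x, y, x, y]) :
    Alternate Bs.flatten x y := by
  rw [alternate_iff_isChain, List.filter_flatten, List.map_congr_left h, List.map_const',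
    List.isChain_flatten (by simp)]
  refine ⟨fun l hl => ?_, List.isChain_replicate_of_rel _ (by simp [hxy.symm])⟩
  rw [List.eq_of_mem_replicate hl]
  simp [hxy, hxy.symm]

end Alternation

/-- Together with `Acyclic`, this is `SemiTransitive` stated with transitive closures. -/
def ShortcutFree (E : V → V → Prop) : Prop :=
  ∀ ⦃x y w⦄, E x y → TransGen E x w → TransGen E w y → E x w ∧ E w y

section WordOrientation

variable [DecidableEq V] {G : SimpleGraph V} {W : List V}

def wordOrientation (G : SimpleGraph V) (W : List V) (x y : V) : Prop :=
  G.Adj x y ∧ Leads W x y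

theorem Represents.isOrientation (hW : Represents W G) :
    IsOrientation G (wordOrientation G W) := by
  refine fun x y => ⟨fun h => ?_, ?_⟩
  · rcases (alternate_iff_leads h.ne).mp ((hW.2 x y h.ne).mp h) with hl | hl
    exacts [Or.inl ⟨h, hl⟩, Or.inr ⟨h.symm, hl⟩]
  · rintro (h | h)
    exacts [h.1, h.1.symm]

theorem count_le_of_reflTransGen {x y : V} (h : ReflTransGen (wordOrientation G W) x y) :
    ∀ u, u <+: W → u.count y ≤ u.count x := by
  induction h with
  | refl => exact fun _ _ => le_rfl
  | tail _ hbc ih => exact fun u hu => (hbc.2 u hu).1.trans (ih u hu)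

theorem Represents.acyclic (hW : Represents W G) : Acyclic (wordOrientation G W) := by
  intro x hx
  obtain ⟨y, hxy, hyx⟩ := TransGen.head'_iff.mp hx
  have hle := count_le_of_reflTransGen hyx
  exact not_leads_and_leads hxy.1.ne (hW.1 x)
    ⟨hxy.2, fun u hu => ⟨hle u hu, (hxy.2 u hu).1.trans (Nat.le_succ _)⟩⟩

theorem Represents.shortcutFree (hW : Represents W G) : ShortcutFree (wordOrientation G W) := by
  intro x y w hxy hxw hwy
  have hxw_le := count_le_of_reflTransGen hxw.to_reflTransGen
  have hwy_le := count_le_of_reflTransGen hwy.to_reflTransGen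
  have of_leads {a b : V} (hab : a ≠ b) (h : Leads W a b) : wordOrientation G W a b :=
    ⟨(hW.2 a b hab).mpr ((alternate_iff_leads hab).mpr (Or.inl h)), h⟩
  refine ⟨of_leads ?_ fun u hu => ?_, of_leads ?_ fun u hu => ?_⟩
  · rintro rfl
    exact hW.acyclic x hxw
  · have := hxy.2 u hu; have := hxw_le u hu; have := hwy_le u hu; omega
  · rintro rfl
    exact hW.acyclic w hwy
  · have := hxy.2 u hu; have := hxw_le u hu; have := hwy_le u hu; omega

end WordOrientation

theorem Acyclic.exists_linearExtension {E : V → V → Prop} (h : Acyclic E) :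
    ∃ t : V → V → Prop, IsLinearOrder V t ∧ ∀ x y, E x y → t x y := by
  have : IsPartialOrder V (ReflTransGen E) :=
    { refl := fun _ => .refl
      trans := fun _ _ _ => ReflTransGen.trans
      antisymm := fun a b hab hba => by
        rcases reflTransGen_iff_eq_or_transGen.mp hab with rfl | hab
        · rfl
        rcases reflTransGen_iff_eq_or_transGen.mp hba with rfl | hba
        · rfl
        exact (h a (hab.trans hba)).elim }
  obtain ⟨t, ht, hle⟩ := extend_partialOrder (ReflTransGen E)
  exact ⟨t, ht, fun x y hxy => hle x y (.single hxy)⟩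

inductive Position
  | self | inNbr | outNbr | ancestor | descendant | incomparable
  deriving DecidableEq

open Classical in
noncomputable def position (E : V → V → Prop) (c z : V) : Position :=
  if z = c then .self
  else if E z c then .inNbr
  else if E c z then .outNbr
  else if TransGen E z c then .ancestor
  else if TransGen E c z then .descendant
  else .incomparable

def blockSegments : List (List Position) :=
  [[.ancestor, .inNbr, .incomparable], [.ancestor], [.self], [.outNbr], [.inNbr], [.self],
    [.descendant], [.incomparable], [.outNbr], [.descendant]]

def blockPattern (p q : Position) : List Bool :=
  blockSegments.flatMap fun s =>
    (if p ∈ s then [true] else []) ++ (if q ∈ s then [false] else [])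

theorem position_self (E : V → V → Prop) (c : V) : position E c c = .self := if_pos rfl

theorem position_of_not_adj {E : V → V → Prop} {c z : V} (hzc : z ≠ c) (h₁ : ¬ E z c)
    (h₂ : ¬ E c z) :
    position E c z = .ancestor ∨ position E c z = .descendant ∨
      position E c z = .incomparable := by
  unfold position
  split_ifs <;> simp_all

theorem blockPattern_position_of_arc {E : V → V → Prop} (hac : Acyclic E) (hsf : ShortcutFree E)
    {x y : V} (hxy : E x y) (c : V) :
    blockPattern (position E c x) (position E c y) = [true, false, true, false] := by
  have hxy' : TransGen E x y := .single hxy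
  have hyx : ¬ E y x := fun h => hac x (hxy'.tail h)
  have hreach_x : TransGen E y c → TransGen E x c := hxy'.trans
  have hreach_y : TransGen E c x → TransGen E c y := fun h => h.tail hxy
  have h1 : E x c → TransGen E y c → E y c := fun h h' => (hsf h hxy' h').2
  have h2 : E c y → TransGen E c x → E c x := fun h h' => (hsf h h' hxy').1
  have h3 : TransGen E x c → TransGen E c y → E x c ∧ E c y := fun h h' => hsf hxy h h'
  have hcc : ¬ TransGen E c c := hac c
  -- these facts exclude every pair of positions whose pattern is not `x y x y`
  unfold position
  split_ifs <;> subst_vars <;> first | rfl | (exfalso; simp_all [TransGen.single])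

theorem not_isChain_blockPattern_self {q : Position}
    (hq : q = .ancestor ∨ q = .descendant ∨ q = .incomparable) :
    ¬ (blockPattern .self q).IsChain (· ≠ ·) ∧ ¬ (blockPattern q .self).IsChain (· ≠ ·) := by
  rcases hq with rfl | rfl | rfl <;> decide

theorem isChain_map_cond {x y : V} (hxy : x ≠ y) {l : List Bool} :
    (l.map (cond · x y)).IsChain (· ≠ ·) ↔ l.IsChain (· ≠ ·) := by
  rw [List.isChain_map]
  refine List.IsChain.iff fun a b => ?_
  cases a <;> cases b <;> simp [hxy, hxy.symm]

section Blocks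

variable [DecidableEq V] (t : V → V → Prop) [DecidableRel t] [IsTrans V t] [Std.Antisymm t]
  [Std.Total t]

theorem count_sort (A : Finset V) (z : V) : (A.sort t).count z = if z ∈ A then 1 else 0 := by
  split_ifs with hz
  · exact List.count_eq_one_of_mem (A.sort_nodup t) ((A.mem_sort t).mpr hz)
  · exact List.count_eq_zero_of_not_mem (mt (A.mem_sort t).mp hz)

theorem filter_eq_or_eq_sort {x y : V} (hxy : x ≠ y) (ht : t x y) (A : Finset V) :
    (A.sort t).filter (fun z => z = x ∨ z = y) =
      (if x ∈ A then [x] else []) ++ (if y ∈ A then [y] else []) := by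
  refine List.Perm.eq_of_pairwise' ((A.pairwise_sort t).filter _) ?_ ?_
  · split_ifs <;> simp [ht]
  · refine (List.perm_ext_iff_of_nodup ((A.sort_nodup t).filter _) ?_).mpr fun z => ?_
    · split_ifs <;> simp [hxy]
    · by_cases hzx : z = x
      · subst hzx; split_ifs <;> simp_all
      · by_cases hzy : z = y
        · subst hzy; split_ifs <;> simp_all
        · simp [hzx, hzy]

variable [Fintype V]

noncomputable def block (E : V → V → Prop) (c : V) : List V :=
  blockSegments.flatMap fun s => (Finset.univ.filter fun z => position E c z ∈ s).sort t

variable {t} {E : V → V → Prop}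

theorem uniform_block (c : V) : Uniform (block t E c) 2 := by
  intro z
  simp only [block, List.count_flatMap, Function.comp_def, count_sort, Finset.mem_filter,
    Finset.mem_univ, true_and]
  cases position E c z <;> rfl

theorem filter_block {x y : V} (hxy : x ≠ y) (ht : t x y) (c : V) :
    (block t E c).filter (fun z => z = x ∨ z = y) =
      (blockPattern (position E c x) (position E c y)).map (cond · x y) := by
  simp only [block, List.filter_flatMap, filter_eq_or_eq_sort t hxy ht, blockPattern,
    List.map_flatMap, List.map_append, Finset.mem_filter, Finset.mem_univ, true_and,
    apply_ite (List.map _)]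
  rfl

theorem filter_block_of_arc (hac : Acyclic E) (hsf : ShortcutFree E)
    (hext : ∀ x y, E x y → t x y) {x y : V} (hxy : E x y) (c : V) :
    (block t E c).filter (fun z => z = x ∨ z = y) = [x, y, x, y] := by
  have hne : x ≠ y := by rintro rfl; exact hac x (.single hxy)
  rw [filter_block hne (hext x y hxy), blockPattern_position_of_arc hac hsf hxy]
  rfl

theorem not_alternate_block {c z : V} (hzc : z ≠ c) (h₁ : ¬ E z c) (h₂ : ¬ E c z) :
    ¬ Alternate (block t E c) c z := by
  have hpat := not_isChain_blockPattern_self (position_of_not_adj hzc h₁ h₂)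
  rcases total_of t c z with ht | ht
  · rw [alternate_iff_isChain, filter_block hzc.symm ht, isChain_map_cond hzc.symm,
      position_self]
    exact hpat.1
  · rw [alternate_comm, alternate_iff_isChain, filter_block hzc ht, isChain_map_cond hzc,
      position_self]
    exact hpat.2

end Blocks

section Representation

variable [DecidableEq V] {G : SimpleGraph V}

theorem kWordRepresentable_flatten {E : V → V → Prop} (hE : IsOrientation G E)
    {Bs : List (List V)} (hne : Bs ≠ []) (huni : ∀ B ∈ Bs, Uniform B 2)
    (harc : ∀ x y, E x y → ∀ B ∈ Bs, B.filter (fun z => z = x ∨ z = y) = [x, y, x, y])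
    (hnon : ∀ x y, x ≠ y → ¬ G.Adj x y → ∃ B ∈ Bs, ¬ Alternate B x y) :
    KWordRepresentable G (2 * Bs.length) := by
  refine ⟨Bs.flatten, uniform_flatten huni, fun x => ?_,
    fun x y hxy => ⟨fun hadj => ?_, fun halt => ?_⟩⟩
  · obtain ⟨B, hB⟩ := List.exists_mem_of_ne_nil Bs hne
    exact List.mem_flatten.mpr ⟨B, hB, List.count_pos_iff.mp (by rw [huni B hB x]; norm_num)⟩
  · rcases (hE x y).mp hadj with h | h
    · exact alternate_flatten hxy (harc x y h)
    · exact alternate_comm.mp (alternate_flatten hxy.symm (harc y x h))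
  · by_contra hadj
    obtain ⟨B, hB, hnalt⟩ := hnon x y hxy hadj
    exact not_alternate_flatten hB hnalt halt

theorem not_alternate_append_reverse {P : List V} {x y : V} (hx : x ∈ P) :
    ¬ Alternate (P ++ P.reverse) x y := by
  rw [alternate_iff_isChain, List.filter_append, List.filter_reverse, List.isChain_append,
    List.head?_reverse]
  obtain ⟨z, hz⟩ : ∃ z, (P.filter (fun z => z = x ∨ z = y)).getLast? = some z :=
    Option.isSome_iff_exists.mp (by simpa [List.getLast?_isSome] using ⟨x, hx, by simp⟩)
  exact fun ⟨_, _, h⟩ => h z hz z hz rfl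

variable [Fintype V]

theorem kWordRepresentable_of_adj {E : V → V → Prop} (hE : IsOrientation G E) (hac : Acyclic E)
    (hsf : ShortcutFree E) {a b : V} (hab : G.Adj a b) (hn : 3 ≤ Fintype.card V) :
    KWordRepresentable G (2 * (Fintype.card V - 2)) := by
  classical
  obtain ⟨t, ht, hext⟩ := hac.exists_linearExtension
  let Bs := (Finset.univ \ {a, b}).toList.map (block t E)
  have hlen : Bs.length = Fintype.card V - 2 := by
    rw [List.length_map, Finset.length_toList, Finset.card_sdiff_of_subset (by simp),
      Finset.card_pair hab.ne, Finset.card_univ]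
  have hmem {c : V} (hc : c ∉ ({a, b} : Finset V)) : block t E c ∈ Bs :=
    List.mem_map_of_mem (by simpa using hc)
  have hblock {c z : V} (hzc : z ≠ c) (hadj : ¬ G.Adj c z) : ¬ Alternate (block t E c) c z :=
    not_alternate_block hzc (fun h => hadj ((hE c z).mpr (Or.inr h)))
      (fun h => hadj ((hE c z).mpr (Or.inl h)))
  rw [← hlen]
  refine kWordRepresentable_flatten hE (List.ne_nil_of_length_pos (by omega))
    (fun B hB => ?_) (fun x y hxy B hB => ?_) fun x y hxy hadj => ?_
  · obtain ⟨c, -, rfl⟩ := List.mem_map.mp hB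
    exact uniform_block c
  · obtain ⟨c, -, rfl⟩ := List.mem_map.mp hB
    exact filter_block_of_arc hac hsf hext hxy c
  · have : x ∉ ({a, b} : Finset V) ∨ y ∉ ({a, b} : Finset V) := by
      by_contra! hxy'
      simp only [Finset.mem_insert, Finset.mem_singleton] at hxy'
      rcases hxy' with ⟨rfl | rfl, rfl | rfl⟩ <;> simp_all [hab.symm]
    rcases this with hx | hy
    · exact ⟨_, hmem hx, hblock hxy.symm hadj⟩
    · exact ⟨_, hmem hy, mt alternate_comm.mp (hblock hxy fun h => hadj h.symm)⟩

theorem kWordRepresentable_of_forall_not_adj (hn : 3 ≤ Fintype.card V)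
    (h : ∀ x y, ¬ G.Adj x y) : KWordRepresentable G (2 * (Fintype.card V - 2)) := by
  let P := (Finset.univ : Finset V).toList
  have hP (z : V) : P.count z = 1 := List.count_eq_one_of_mem (Finset.nodup_toList _) (by simp [P])
  have := kWordRepresentable_flatten (G := G) (E := fun _ _ => False)
    (Bs := List.replicate (Fintype.card V - 2) (P ++ P.reverse)) (by simp [IsOrientation, h])
    (by simp; omega) (fun B hB z => by simp [List.eq_of_mem_replicate hB, hP]) (fun _ _ h => h.elim)
    fun x y _ _ => ⟨_, List.mem_replicate.mpr ⟨by omega, rfl⟩,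
      not_alternate_append_reverse (by simp [P])⟩
  rwa [List.length_replicate] at this

end Representation

/-- Every word-representable graph on `n ≥ 3` vertices is
`2(n-2)`-word-representable. -/
theorem stmt_5 {V : Type*} [Fintype V] [DecidableEq V] (G : SimpleGraph V)
    (hn : 3 ≤ Fintype.card V) (h : WordRepresentable G) :
    KWordRepresentable G (2 * (Fintype.card V - 2)) := by
  obtain ⟨W, hW⟩ := h
  rcases em (∃ a b, G.Adj a b) with ⟨a, b, hab⟩ | hadj
  · exact kWordRepresentable_of_adj hW.isOrientation hW.acyclic hW.shortcutFree hab hn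
  · exact kWordRepresentable_of_forall_not_adj hn fun x y hxy => hadj ⟨x, y, hxy⟩
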